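/- arXiv:math/0408159 — 6 statements merged into one kernel-verified Lean document; each statement's English description precedes it below -/
import Mathlib

section
/- Let K be a subfield of ℝ that is a finite extension of ℚ and is totally real, and let f(X) = X³ + pX + q with p, q ∈ K be irreducible over K. Let L ⊆ ℂ be the splitting field of f over K. Then L is totally real if and only if for every field embedding σ : K → ℝ one has 27·σ(q)² + 4·σ(p)³ < 0 (i.e., the discriminant Δ₃ = −(27q² + 4p³) of f is totally positive in K). -/
/-!
Everything reduces to the real cubics `f^σ = X³ + σ(p) X + σ(q)`, `σ` a real embedding of `K`.
If `27σ(q)² + 4σ(p)³ < 0`, every complex root of `f^σ` is real. An embedding of `L` into `ℂ`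
restricts to some such `σ` on `K` (as `K` is totally real) and sends roots of `f` to roots of
`f^σ`, so it is real on the generators of `L`, hence on `L`. Conversely, `f` is separable, so `f^σ`
has three distinct complex roots; were they all real, `-(27σ(q)² + 4σ(p)³)` would be the square of
their Vandermonde product, hence positive. So some root `β` of `f^σ` is non-real, and since `f` is
the minimal polynomial of each of its roots `α ∈ L`, `σ` extends to an embedding of `L` with
`α ↦ β`.
-/

open Polynomial NumberField.ComplexEmbedding

theorem depressed_cubic_discr_eq_neg_sq {R : Type*} [CommRing R] [IsDomain R] {p q x y z : R}
    (hxy : x ≠ y) (hxz : x ≠ z) (hyz : y ≠ z) (hx : x ^ 3 + p * x + q = 0)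
    (hy : y ^ 3 + p * y + q = 0) (hz : z ^ 3 + p * z + q = 0) :
    27 * q ^ 2 + 4 * p ^ 3 = -((x - y) * (x - z) * (y - z)) ^ 2 := by
  have hxy' : x ^ 2 + x * y + y ^ 2 + p = 0 := by
    have : (x - y) * (x ^ 2 + x * y + y ^ 2 + p) = 0 := by linear_combination hx - hy
    exact (mul_eq_zero.1 this).resolve_left (sub_ne_zero.2 hxy)
  have hxz' : x ^ 2 + x * z + z ^ 2 + p = 0 := by
    have : (x - z) * (x ^ 2 + x * z + z ^ 2 + p) = 0 := by linear_combination hx - hz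
    exact (mul_eq_zero.1 this).resolve_left (sub_ne_zero.2 hxz)
  have hsum : z = -x - y := by
    have : (y - z) * (x + y + z) = 0 := by linear_combination hxy' - hxz'
    linear_combination (mul_eq_zero.1 this).resolve_left (sub_ne_zero.2 hyz)
  have hp : p = -(x ^ 2 + x * y + y ^ 2) := by linear_combination hxy'
  have hq : q = -x ^ 3 - p * x := by linear_combination hx
  subst hsum hq hp
  ring

theorem Complex.im_eq_zero_of_depressed_cubic_root {p q : ℝ} (h : 27 * q ^ 2 + 4 * p ^ 3 < 0)
    {z : ℂ} (hz : z ^ 3 + p * z + q = 0) : z.im = 0 := by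
  by_contra hb
  obtain ⟨a, b⟩ := z
  have hre := congrArg re hz
  have him := congrArg im hz
  simp only [pow_succ, pow_zero, one_mul, add_re, add_im, mul_re, mul_im, ofReal_re,
    ofReal_im, zero_re, zero_im] at hre him
  -- a non-real root `a + bi` forces `p = b² - 3a²` and `q = 2a(a² + b²)`
  have hp : p = b ^ 2 - 3 * a ^ 2 := by
    have : b * (p + 3 * a ^ 2 - b ^ 2) = 0 := by linear_combination him
    linear_combination (mul_eq_zero.1 this).resolve_left hb
  have hq : q = 2 * a * (a ^ 2 + b ^ 2) := by linear_combination hre - a * hp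
  have : 27 * q ^ 2 + 4 * p ^ 3 = 4 * (b * (9 * a ^ 2 + b ^ 2)) ^ 2 := by rw [hp, hq]; ring
  linarith [sq_nonneg (b * (9 * a ^ 2 + b ^ 2))]

theorem Complex.exists_depressed_cubic_root (p q : ℂ) : ∃ z : ℂ, z ^ 3 + p * z + q = 0 := by
  have hdeg : (X ^ 3 + C p * X + C q).degree = 3 := by compute_degree!
  obtain ⟨z, hz⟩ := Complex.exists_root (f := X ^ 3 + C p * X + C q) (by simp [hdeg])
  exact ⟨z, by simpa using hz⟩

theorem Complex.exists_depressed_cubic_root_im_ne_zero {p q : ℝ}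
    (hsep : (X ^ 3 + C (p : ℂ) * X + C (q : ℂ)).Separable) (h : 0 ≤ 27 * q ^ 2 + 4 * p ^ 3) :
    ∃ z : ℂ, z ^ 3 + p * z + q = 0 ∧ z.im ≠ 0 := by
  by_contra! hreal
  set g : ℂ[X] := X ^ 3 + C (p : ℂ) * X + C (q : ℂ)
  have hcard : g.roots.card = 3 := by
    rw [← IsAlgClosed.splits g |>.natDegree_eq_card_roots]
    simp only [g]
    compute_degree!
  have hroot : ∀ z ∈ g.roots, ∃ x : ℝ, (x : ℂ) = z ∧ x ^ 3 + p * x + q = 0 := by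
    intro z hz
    have hz : z ^ 3 + p * z + q = 0 := by simpa [g] using (mem_roots hsep.ne_zero).1 hz
    have hre : (z.re : ℂ) = z := Complex.ext rfl (hreal z hz).symm
    exact ⟨z.re, hre, by rw [← hre] at hz; exact_mod_cast hz⟩
  obtain ⟨z₁, z₂, z₃, hroots⟩ := Multiset.card_eq_three.1 hcard
  have hnodup := nodup_roots hsep
  rw [hroots] at hnodup hroot
  simp only [Multiset.insert_eq_cons, Multiset.nodup_cons, Multiset.mem_cons,
    Multiset.mem_singleton, not_or] at hnodup hroot
  obtain ⟨x₁, rfl, hx₁⟩ := hroot z₁ (by simp)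
  obtain ⟨x₂, rfl, hx₂⟩ := hroot z₂ (by simp)
  obtain ⟨x₃, rfl, hx₃⟩ := hroot z₃ (by simp)
  obtain ⟨⟨h₁₂, h₁₃⟩, h₂₃, -⟩ := hnodup
  replace h₁₂ : x₁ ≠ x₂ := by exact_mod_cast h₁₂
  replace h₁₃ : x₁ ≠ x₃ := by exact_mod_cast h₁₃
  replace h₂₃ : x₂ ≠ x₃ := by exact_mod_cast h₂₃
  have hvdm : (x₁ - x₂) * (x₁ - x₃) * (x₂ - x₃) ≠ 0 :=
    mul_ne_zero (mul_ne_zero (sub_ne_zero.2 h₁₂) (sub_ne_zero.2 h₁₃)) (sub_ne_zero.2 h₂₃)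
  linarith [depressed_cubic_discr_eq_neg_sq h₁₂ h₁₃ h₂₃ hx₁ hx₂ hx₃, sq_pos_of_ne_zero hvdm]

theorem Subfield.closure_closure_coe_preimage {E : Type*} [Field E] {S : Set E} :
    closure (((↑) : closure S → E) ⁻¹' S) = ⊤ :=
  eq_top_iff.2 fun x _ ↦ Subtype.recOn x fun _ hx ↦
    closure_induction (fun _ h ↦ subset_closure h) (one_mem _) (fun _ _ _ _ ↦ add_mem)
      (fun _ _ ↦ neg_mem) (fun _ _ ↦ inv_mem) (fun _ _ _ _ ↦ mul_mem) hx

theorem isReal_iff_forall_im_eq_zero {F : Type*} [Field F] {φ : F →+* ℂ} :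
    IsReal φ ↔ ∀ x, (φ x).im = 0 := by
  simp only [isReal_iff, RingHom.ext_iff, conjugate_coe_eq, Complex.conj_eq_iff_im]

theorem exists_ringHom_apply_eq_of_irreducible {F E A : Type*} [Field F] [Field E] [Field A]
    [IsAlgClosed A] [Algebra F E] [Algebra.IsAlgebraic F E] (ρ : F →+* A) {x : E} {g : F[X]}
    (hg : Irreducible g) (hx : aeval x g = 0) {β : A} (hβ : g.eval₂ ρ β = 0) :
    ∃ τ : E →+* A, τ x = β := by
  let _ : Algebra F A := ρ.toAlgebra
  have hβ' : β ∈ (minpoly F x).rootSet A := by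
    rw [mem_rootSet, ← minpoly.eq_of_irreducible hg hx]
    refine ⟨mul_ne_zero hg.ne_zero (by simpa using hg.ne_zero), ?_⟩
    simp [aeval_def, RingHom.algebraMap_toAlgebra, hβ]
  obtain ⟨ψ, hψ⟩ := (Algebra.IsAlgebraic.range_eval_eq_rootSet_minpoly (F := F) A x).symm ▸ hβ'
  exact ⟨ψ, hψ⟩

section CubicSplittingSubfield

variable {K : Subfield ℝ} (a b : K)

noncomputable def cubicSplittingSubfield : Subfield ℂ :=
  Subfield.closure
    ((Complex.ofReal '' ↑K) ∪ {z : ℂ | z ^ 3 + ((a : ℝ) : ℂ) * z + ((b : ℝ) : ℂ) = 0})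

noncomputable instance : Algebra K (cubicSplittingSubfield a b) :=
  ((Complex.ofRealHom.comp K.subtype).codRestrict _
    fun x ↦ Subfield.subset_closure (Or.inl ⟨x, x.2, rfl⟩)).toAlgebra

namespace cubicSplittingSubfield

variable {a b}

@[simp]
theorem coe_algebraMap (x : K) :
    (algebraMap K (cubicSplittingSubfield a b) x : ℂ) = (x : ℝ) :=
  rfl

theorem aeval_mk {z : ℂ} (hz : z ^ 3 + ((a : ℝ) : ℂ) * z + ((b : ℝ) : ℂ) = 0) :
    aeval (⟨z, Subfield.subset_closure (Or.inr hz)⟩ : cubicSplittingSubfield a b)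
      (X ^ 3 + C a * X + C b) = 0 := by
  ext
  simpa using hz

theorem subfield_eq_top {M : Subfield (cubicSplittingSubfield a b)}
    (hK : ∀ x : K, algebraMap K _ x ∈ M)
    (hroot : ∀ {z : ℂ} (hz : z ^ 3 + ((a : ℝ) : ℂ) * z + ((b : ℝ) : ℂ) = 0),
      ⟨z, Subfield.subset_closure (Or.inr hz)⟩ ∈ M) :
    M = ⊤ := by
  refine eq_top_iff.2 <| Subfield.closure_closure_coe_preimage.ge.trans (Subfield.closure_le.2 ?_)
  rintro ⟨z, hz⟩ (⟨x, hx, rfl⟩ | hz')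
  · exact hK ⟨x, hx⟩
  · exact hroot hz'

instance isAlgebraic : Algebra.IsAlgebraic K (cubicSplittingSubfield a b) := by
  rw [← algebraicClosure.eq_top_iff, ← IntermediateField.toSubfield_inj,
    IntermediateField.top_toSubfield]
  refine subfield_eq_top (fun x ↦ ?_) fun hz ↦ ?_
  all_goals rw [IntermediateField.mem_toSubfield, mem_algebraicClosure_iff]
  · exact isAlgebraic_algebraMap x
  · exact ⟨_, (by monicity! : (X ^ 3 + C a * X + C b).Monic).ne_zero,
      aeval_mk hz⟩

theorem isReal_of_discr_neg (hK : ∀ σ : K →+* ℂ, IsReal σ)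
    (hdisc : ∀ σ : K →+* ℝ, 27 * σ b ^ 2 + 4 * σ a ^ 3 < 0)
    (τ : cubicSplittingSubfield a b →+* ℂ) : IsReal τ := by
  have hreal := hK (τ.comp (algebraMap K _))
  have hσ (x : K) : τ (algebraMap K _ x) = hreal.embedding x :=
    (hreal.coe_embedding_apply x).symm
  suffices htop : (conjugate τ).eqLocusField τ = ⊤ from
    isReal_iff.2 <| RingHom.eq_of_eqOn_subfield_top fun x _ ↦
      RingHom.mem_eqLocusField.1 (htop ▸ Subfield.mem_top x)
  refine subfield_eq_top (fun x ↦ ?_) fun hz ↦ ?_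
  all_goals rw [RingHom.mem_eqLocusField, conjugate_coe_eq]
  · exact (hσ x).symm ▸ Complex.conj_ofReal _
  · have := congrArg τ (aeval_mk hz)
    simp only [map_add, map_mul, map_pow, aeval_X, aeval_C, hσ, map_zero] at this
    exact Complex.conj_eq_iff_im.2
      (Complex.im_eq_zero_of_depressed_cubic_root (hdisc hreal.embedding) this)

theorem discr_neg_of_forall_isReal (hirr : Irreducible (X ^ 3 + C a * X + C b))
    (h : ∀ τ : cubicSplittingSubfield a b →+* ℂ, IsReal τ) (σ : K →+* ℝ) :
    27 * σ b ^ 2 + 4 * σ a ^ 3 < 0 := by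
  by_contra! hge
  have hsep : (X ^ 3 + C (σ a : ℂ) * X + C (σ b : ℂ)).Separable := by
    simpa using hirr.separable.map (f := Complex.ofRealHom.comp σ)
  obtain ⟨β, hβ, hβim⟩ := Complex.exists_depressed_cubic_root_im_ne_zero hsep hge
  obtain ⟨z, hz⟩ := Complex.exists_depressed_cubic_root ((a : ℝ) : ℂ) ((b : ℝ) : ℂ)
  obtain ⟨τ, rfl⟩ := exists_ringHom_apply_eq_of_irreducible (Complex.ofRealHom.comp σ) hirr
    (aeval_mk hz) (by simpa using hβ)
  exact hβim (isReal_iff_forall_im_eq_zero.1 (h τ) _)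

end cubicSplittingSubfield

end CubicSplittingSubfield

open Polynomial in
theorem cubic_splitting_field_totally_real_iff_general
    (K : Subfield ℝ)
    (hKtr : ∀ σ : K →+* ℂ, ∀ x : K, (σ x).im = 0)
    (p q : ℝ) (hp : p ∈ K) (hq : q ∈ K)
    (hirr : Irreducible (X ^ 3 + C (⟨p, hp⟩ : K) * X + C (⟨q, hq⟩ : K)))
    (L : Subfield ℂ)
    (hL : L = Subfield.closure
      ((Complex.ofReal '' ↑K) ∪ {z : ℂ | z ^ 3 + (p : ℂ) * z + (q : ℂ) = 0})) :
    (∀ σ : L →+* ℂ, ∀ x : L, (σ x).im = 0) ↔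
      (∀ σ : K →+* ℝ, 27 * σ ⟨q, hq⟩ ^ 2 + 4 * σ ⟨p, hp⟩ ^ 3 < 0) := by
  subst hL
  simp only [← isReal_iff_forall_im_eq_zero] at hKtr ⊢
  exact ⟨cubicSplittingSubfield.discr_neg_of_forall_isReal (a := ⟨p, hp⟩) (b := ⟨q, hq⟩) hirr,
    cubicSplittingSubfield.isReal_of_discr_neg hKtr⟩

open Polynomial in
/-- For a totally real finite extension `K ⊆ ℝ` of ℚ and an irreducible
cubic `f = X³ + pX + q` over `K`, the splitting field `L ⊆ ℂ` of `f` over `K` is totally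
real iff the discriminant `-(27q² + 4p³)` is totally positive in `K`, i.e., iff
`27·σ(q)² + 4·σ(p)³ < 0` for every embedding `σ : K → ℝ`. -/
theorem cubic_splitting_field_totally_real_iff
    (K : Subfield ℝ) (hfin : FiniteDimensional ℚ K)
    (hKtr : ∀ σ : K →+* ℂ, ∀ x : K, (σ x).im = 0)
    (p q : ℝ) (hp : p ∈ K) (hq : q ∈ K)
    (hirr : Irreducible (X ^ 3 + C (⟨p, hp⟩ : K) * X + C (⟨q, hq⟩ : K)))
    (L : Subfield ℂ)
    (hL : L = Subfield.closure
      ((Complex.ofReal '' ↑K) ∪ {z : ℂ | z ^ 3 + (p : ℂ) * z + (q : ℂ) = 0})) :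
    (∀ σ : L →+* ℂ, ∀ x : L, (σ x).im = 0) ↔
      (∀ σ : K →+* ℝ, 27 * σ ⟨q, hq⟩ ^ 2 + 4 * σ ⟨p, hp⟩ ^ 3 < 0) :=
  cubic_splitting_field_totally_real_iff_general K hKtr p q hp hq hirr L hL
end

section
/- Let K be a subfield of ℝ that is a finite extension of ℚ and is totally real, and let f(X) = X³ + pX + q with p, q ∈ K be irreducible over K. If the splitting field L ⊆ ℂ of f over K is totally real, then −p is totally positive in K, i.e., σ(p) < 0 for every field embedding σ : K → ℝ. -/
/-!
Extend an embedding `σ : K → ℝ` to the algebraic extension `L`; since `L` is totally real, the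
extension lands in `ℝ` and sends two distinct roots `s ≠ t` of the cubic to two distinct real roots
of `X³ + σ(p) X + σ(q)`. Subtracting the two root equations and dividing by `s - t` gives
`s² + st + t² = -σ(p)`, and the left side is positive.
-/

open Polynomial

theorem neg_of_cubic_roots_ne {F : Type*} [Field F] [LinearOrder F] [IsStrictOrderedRing F]
    {a b s t : F} (hs : s ^ 3 + a * s + b = 0) (ht : t ^ 3 + a * t + b = 0) (hst : s ≠ t) :
    a < 0 := by
  have hsub : s - t ≠ 0 := sub_ne_zero.mpr hst
  have hquad : s ^ 2 + s * t + t ^ 2 + a = 0 := by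
    refine (mul_eq_zero.mp ?_).resolve_left hsub
    linear_combination hs - ht
  nlinarith [sq_nonneg (s + t), sq_pos_of_ne_zero hsub]

theorem RingHom.exists_comp_algebraMap_eq {K M Ω : Type*} [Field K] [Field M] [Field Ω]
    [IsAlgClosed Ω] [Algebra K M] [Algebra.IsAlgebraic K M] (σ : K →+* Ω) :
    ∃ τ : M →+* Ω, τ.comp (algebraMap K M) = σ := by
  let : Algebra K Ω := σ.toAlgebra
  let τ : M →ₐ[K] Ω := IsAlgClosed.lift
  exact ⟨τ.toRingHom, RingHom.ext τ.commutes⟩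

def RingHom.complexRe {A : Type*} [Ring A] (τ : A →+* ℂ) (h : ∀ x, (τ x).im = 0) : A →+* ℝ where
  toFun x := (τ x).re
  map_one' := by simp
  map_mul' x y := by simp [Complex.mul_re, h]
  map_zero' := by simp
  map_add' x y := by simp

theorem RingHom.ofReal_complexRe {A : Type*} [Ring A] (τ : A →+* ℂ) (h : ∀ x, (τ x).im = 0)
    (x : A) : ((τ.complexRe h x : ℝ) : ℂ) = τ x :=
  Complex.ext rfl (h x).symm

theorem exists_real_extension {K M : Type*} [Field K] [Field M] [Algebra K M]
    [Algebra.IsAlgebraic K M]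
    (hM : ∀ τ : M →+* ℂ, ∀ x, (τ x).im = 0) (σ : K →+* ℝ) :
    ∃ ρ : M →+* ℝ, ρ.comp (algebraMap K M) = σ := by
  obtain ⟨τ, hτ⟩ := (Complex.ofRealHom.comp σ).exists_comp_algebraMap_eq (M := M)
  refine ⟨τ.complexRe (hM τ), RingHom.ext fun x => Complex.ofReal_injective ?_⟩
  simpa [RingHom.ofReal_complexRe] using RingHom.congr_fun hτ x

theorem exists_aeval_eq_zero_ne {F E : Type*} [Field F] [Field E] [Algebra F E] {f : F[X]}
    (hsep : f.Separable) (hsplit : (f.map (algebraMap F E)).Splits) (hdeg : 1 < f.natDegree) :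
    ∃ x y : E, x ≠ y ∧ aeval x f = 0 ∧ aeval y f = 0 := by
  classical
  rw [← card_rootSet_eq_natDegree hsep hsplit, Fintype.one_lt_card_iff] at hdeg
  obtain ⟨⟨x, hx⟩, ⟨y, hy⟩, hxy⟩ := hdeg
  exact ⟨x, y, fun h => hxy (Subtype.ext h), (mem_rootSet.mp hx).2, (mem_rootSet.mp hy).2⟩

@[simp]
theorem Subfield.algebraMap_complex_apply (K : Subfield ℝ) (x : K) :
    algebraMap K ℂ x = ((x : ℝ) : ℂ) :=
  rfl

theorem Subfield.closure_image_ofReal_union (K : Subfield ℝ) (S : Set ℂ) :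
    Subfield.closure (Complex.ofReal '' K ∪ S) = (IntermediateField.adjoin K S).toSubfield := by
  rw [IntermediateField.adjoin_toSubfield]
  congr
  ext z
  simp [eq_comm]

theorem cubic_splitting_field_totally_real_p_totally_negative_general
    (K : Subfield ℝ)
    (p q : ℝ) (hp : p ∈ K) (hq : q ∈ K)
    (hirr : Irreducible (X ^ 3 + C (⟨p, hp⟩ : K) * X + C (⟨q, hq⟩ : K)))
    (L : Subfield ℂ)
    (hL : L = Subfield.closure
      ((Complex.ofReal '' ↑K) ∪ {z : ℂ | z ^ 3 + (p : ℂ) * z + (q : ℂ) = 0}))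
    (hLtr : ∀ σ : L →+* ℂ, ∀ x : L, (σ x).im = 0) :
    ∀ σ : K →+* ℝ, σ ⟨p, hp⟩ < 0 := by
  intro σ
  set f : K[X] := X ^ 3 + C ⟨p, hp⟩ * X + C ⟨q, hq⟩
  have hdeg : f.natDegree = 3 := by unfold f; compute_degree!
  have hroots : f.rootSet ℂ = {z : ℂ | z ^ 3 + (p : ℂ) * z + (q : ℂ) = 0} := by
    ext z
    simp [mem_rootSet, hirr.ne_zero, f]
  let M := IntermediateField.adjoin K (f.rootSet ℂ)
  have : IsSplittingField K M f :=
    IntermediateField.adjoin_rootSet_isSplittingField (IsAlgClosed.splits _)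
  have : FiniteDimensional K M := IsSplittingField.finiteDimensional M f
  rw [← hroots, Subfield.closure_image_ofReal_union] at hL
  subst hL
  obtain ⟨ρ, hρ⟩ := exists_real_extension (M := M) hLtr σ
  obtain ⟨x, y, hxy, hx, hy⟩ := exists_aeval_eq_zero_ne (E := M) hirr.separable
    (IsSplittingField.splits M f) (by omega)
  have hroot : ∀ z : M, aeval z f = 0 → ρ z ^ 3 + σ ⟨p, hp⟩ * ρ z + σ ⟨q, hq⟩ = 0 := by
    intro z hz
    have := congrArg ρ hz
    rw [aeval_def, hom_eval₂, hρ, map_zero] at this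
    simpa [f] using this
  exact neg_of_cubic_roots_ne (hroot x hx) (hroot y hy) (ρ.injective.ne hxy)

open Polynomial in
/-- For a totally real finite extension `K ⊆ ℝ` of ℚ and an irreducible
cubic `f = X³ + pX + q` over `K`, if the splitting field `L ⊆ ℂ` of `f` over `K` is
totally real, then `-p` is totally positive in `K`: `σ(p) < 0` for every `σ : K → ℝ`. -/
theorem cubic_splitting_field_totally_real_p_totally_negative
    (K : Subfield ℝ) (hfin : FiniteDimensional ℚ K)
    (hKtr : ∀ σ : K →+* ℂ, ∀ x : K, (σ x).im = 0)
    (p q : ℝ) (hp : p ∈ K) (hq : q ∈ K)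
    (hirr : Irreducible (X ^ 3 + C (⟨p, hp⟩ : K) * X + C (⟨q, hq⟩ : K)))
    (L : Subfield ℂ)
    (hL : L = Subfield.closure
      ((Complex.ofReal '' ↑K) ∪ {z : ℂ | z ^ 3 + (p : ℂ) * z + (q : ℂ) = 0}))
    (hLtr : ∀ σ : L →+* ℂ, ∀ x : L, (σ x).im = 0) :
    ∀ σ : K →+* ℝ, σ ⟨p, hp⟩ < 0 :=
  cubic_splitting_field_totally_real_p_totally_negative_general K p q hp hq hirr L hL hLtr
end

section
/- The polynomial X⁴ − 2X² − 1 ∈ ℚ[X] is irreducible over ℚ, the real number √(1+√2) is a root of it, and it has a root in ℂ that is not real. Consequently √(1+√2) is not totally real. -/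
/-!
The substitution `X ↦ X + 1` turns `X⁴ - 2X² - 1` into `X⁴ + 4X³ + 4X² - 2`, which is Eisenstein
at `2`; so the quartic is irreducible over `ℤ` and, being monic, over `ℚ` by Gauss's lemma.
Since `x⁴ - 2x² - 1 = (x² - 1)² - 2`, its roots are the `x` with `x² = 1 ± √2`: the choice
`x² = 1 + √2` gives `√(1+√2)`, and `x² = 1 - √2 < 0` gives a purely imaginary root.
-/

open Polynomial

theorem Polynomial.irreducible_comp_X_add_C_iff {R : Type*} [CommRing R] (p : R[X]) (t : R) :
    Irreducible (p.comp (X + C t)) ↔ Irreducible p := by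
  rw [comp_eq_aeval, ← algEquivAevalXAddC_apply]
  exact MulEquiv.irreducible_iff (algEquivAevalXAddC t).toMulEquiv

theorem monic_X_pow_four_sub_two_mul_X_sq_sub_one {R : Type*} [CommRing R] [Nontrivial R] :
    (X ^ 4 - 2 * X ^ 2 - 1 : R[X]).Monic := by
  monicity!

theorem natDegree_X_pow_four_sub_two_mul_X_sq_sub_one {R : Type*} [CommRing R] [Nontrivial R] :
    (X ^ 4 - 2 * X ^ 2 - 1 : R[X]).natDegree = 4 := by
  compute_degree!

theorem isEisensteinAt_two_comp_X_add_one :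
    ((X ^ 4 - 2 * X ^ 2 - 1 : ℤ[X]).comp (X + C 1)).IsEisensteinAt (Ideal.span {2}) := by
  have hshift : (X ^ 4 - 2 * X ^ 2 - 1 : ℤ[X]).comp (X + C 1) =
      X ^ 4 + C 4 * X ^ 3 + C 4 * X ^ 2 - C 2 := by
    simp only [sub_comp, pow_comp, mul_comp, X_comp, ofNat_comp, one_comp, C_1, map_ofNat]
    ring
  have hdeg : (X ^ 4 + C 4 * X ^ 3 + C 4 * X ^ 2 - C 2 : ℤ[X]).natDegree = 4 := by
    compute_degree!
  have hmonic : (X ^ 4 + C 4 * X ^ 3 + C 4 * X ^ 2 - C 2 : ℤ[X]).Monic := by monicity!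
  rw [hshift]
  refine ⟨?_, fun {n} hn ↦ ?_, ?_⟩
  · rw [hmonic.leadingCoeff]
    simp [Ideal.mem_span_singleton]
  · rw [hdeg] at hn
    interval_cases n <;> simp [Ideal.mem_span_singleton]
  · simp [Ideal.span_singleton_pow, Ideal.mem_span_singleton]

theorem irreducible_X_pow_four_sub_two_mul_X_sq_sub_one :
    Irreducible (X ^ 4 - 2 * X ^ 2 - 1 : ℚ[X]) := by
  have hmonic : ((X ^ 4 - 2 * X ^ 2 - 1 : ℤ[X]).comp (X + C 1)).Monic :=
    monic_X_pow_four_sub_two_mul_X_sq_sub_one.comp (monic_X_add_C 1)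
      (by rw [natDegree_X_add_C]; exact one_ne_zero)
  have hint : Irreducible (X ^ 4 - 2 * X ^ 2 - 1 : ℤ[X]) := by
    rw [← irreducible_comp_X_add_C_iff _ 1]
    exact isEisensteinAt_two_comp_X_add_one.irreducible
      ((Ideal.span_singleton_prime two_ne_zero).2 Int.prime_two) hmonic.isPrimitive
      (by
        rw [natDegree_comp, natDegree_X_add_C, natDegree_X_pow_four_sub_two_mul_X_sq_sub_one]
        norm_num)
  simpa using (IsPrimitive.Int.irreducible_iff_irreducible_map_cast
    monic_X_pow_four_sub_two_mul_X_sq_sub_one.isPrimitive).mp hint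

theorem aeval_X_pow_four_sub_two_mul_X_sq_sub_one {R A : Type*} [CommRing R] [CommRing A]
    [Algebra R A] (x : A) :
    aeval x (X ^ 4 - 2 * X ^ 2 - 1 : R[X]) = (x ^ 2 - 1) ^ 2 - 2 := by
  simp only [map_sub, map_mul, map_pow, aeval_X, map_ofNat, map_one]
  ring

theorem Complex.exists_sq_eq_ofReal_and_im_ne_zero {t : ℝ} (ht : t < 0) :
    ∃ z : ℂ, z ^ 2 = t ∧ z.im ≠ 0 := by
  refine ⟨Real.sqrt (-t) * I, ?_, by simpa using (Real.sqrt_pos.2 (neg_pos.2 ht)).ne'⟩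
  rw [mul_pow, I_sq, ← ofReal_pow, Real.sq_sqrt (by linarith)]
  push_cast
  ring

open Polynomial in
/-- `X⁴ - 2X² - 1` is irreducible over ℚ, `√(1+√2)` is a root of it, and it
has a nonreal complex root; consequently `√(1+√2)` is not totally real. -/
theorem sqrt_one_add_sqrt_two_not_totally_real :
    Irreducible (X ^ 4 - 2 * X ^ 2 - 1 : ℚ[X]) ∧
    aeval (Real.sqrt (1 + Real.sqrt 2)) (X ^ 4 - 2 * X ^ 2 - 1 : ℚ[X]) = 0 ∧
    ∃ z : ℂ, aeval z (X ^ 4 - 2 * X ^ 2 - 1 : ℚ[X]) = 0 ∧ z.im ≠ 0 := by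
  have hsqrt_two : Real.sqrt 2 ^ 2 = 2 := Real.sq_sqrt zero_le_two
  refine ⟨irreducible_X_pow_four_sub_two_mul_X_sq_sub_one, ?_, ?_⟩
  · rw [aeval_X_pow_four_sub_two_mul_X_sq_sub_one, Real.sq_sqrt (by positivity)]
    simp [hsqrt_two]
  · have hneg : 1 - Real.sqrt 2 < 0 := by
      rw [sub_neg, Real.lt_sqrt zero_le_one]; norm_num
    obtain ⟨z, hz, hz_im⟩ := Complex.exists_sq_eq_ofReal_and_im_ne_zero hneg
    refine ⟨z, ?_, hz_im⟩
    rw [aeval_X_pow_four_sub_two_mul_X_sq_sub_one, hz]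
    norm_cast
    simp [hsqrt_two]
end

section
/- The real number w = (6·cos(2π/7) + 1)/(2√7) satisfies 4w³ − 3w = 1/√28. Equivalently, w = cos θ for an angle θ with cos(3θ) = 1/√28. -/
/-!
With `x = 2π/7` we have `4x = 2π - 3x`, so `c = cos x` satisfies `cos 4x = cos 3x`,
a quartic in `c` with the spurious root `c = 1`; removing it leaves the heptagon cubic for `t = 2c`.
The substitution `t = (2√7 w - 1)/3` turns that cubic into `4w³ - 3w = 1/(2√7)`, the triple-angle
identity for `cos`, and every real root of `4w³ - 3w = a` with `|a| ≤ 1` lies in `[-1, 1]`.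
-/

open Real

theorem two_cos_two_pi_div_seven_cubic :
    (2 * cos (2 * π / 7)) ^ 3 + (2 * cos (2 * π / 7)) ^ 2 - 2 * (2 * cos (2 * π / 7)) - 1 = 0 := by
  set x := 2 * π / 7
  set c := cos x
  have hcos_four_eq_cos_three : cos (2 * (2 * x)) = cos (3 * x) := by
    rw [show 2 * (2 * x) = 2 * π - 3 * x by ring, cos_two_pi_sub]
  rw [cos_two_mul, cos_two_mul, cos_three_mul] at hcos_four_eq_cos_three
  have hc_lt_one : c < 1 := by
    simpa using cos_lt_cos_of_nonneg_of_le_pi le_rfl (by simp only [x]; linarith [pi_pos]) (by positivity)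
  have hfactor : (c - 1) * (8 * c ^ 3 + 4 * c ^ 2 - 4 * c - 1) = 0 := by
    linear_combination hcos_four_eq_cos_three
  linear_combination (mul_eq_zero.mp hfactor).resolve_left (sub_ne_zero.mpr hc_lt_one.ne)

/-- The heptagon cubic `t³ + t² - 2t - 1 = 0`, depressed by `z = t + 1/3` and scaled by
`z = (2s/3) w` where `s² = 7`. -/
theorem chebyshev_cubic_of_heptagon_cubic {t s : ℝ} (ht : t ^ 3 + t ^ 2 - 2 * t - 1 = 0)
    (hs : s ^ 2 = 7) : 4 * ((3 * t + 1) / (2 * s)) ^ 3 - 3 * ((3 * t + 1) / (2 * s)) = 1 / (2 * s) := by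
  have hs0 : s ≠ 0 := by rintro rfl; norm_num at hs
  field_simp
  linear_combination 108 * ht - (36 * t + 16) * hs

/-- `4w³ - 3w - 1 = (w - 1)(2w + 1)²` and `4w³ - 3w + 1 = (w + 1)(2w - 1)²`. -/
theorem abs_le_one_of_abs_four_mul_pow_three_sub_le_one {w : ℝ} (h : |4 * w ^ 3 - 3 * w| ≤ 1) :
    |w| ≤ 1 := by
  obtain ⟨h_ge, h_le⟩ := abs_le.mp h
  rw [abs_le]
  constructor
  · by_contra! hw
    nlinarith [mul_pos (by linarith : 0 < -1 - w) (pow_pos (by linarith : 0 < 1 - 2 * w) 2)]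
  · by_contra! hw
    nlinarith [mul_pos (by linarith : 0 < w - 1) (pow_pos (by linarith : 0 < 2 * w + 1) 2)]

theorem exists_cos_eq_and_cos_three_mul_eq {w a : ℝ} (hw : 4 * w ^ 3 - 3 * w = a) (ha : |a| ≤ 1) :
    ∃ θ : ℝ, w = cos θ ∧ cos (3 * θ) = a := by
  obtain ⟨hw_ge, hw_le⟩ := abs_le.mp (abs_le_one_of_abs_four_mul_pow_three_sub_le_one (hw ▸ ha))
  refine ⟨arccos w, (cos_arccos hw_ge hw_le).symm, ?_⟩
  rw [cos_three_mul, cos_arccos hw_ge hw_le, hw]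

theorem sqrt_twenty_eight : √28 = 2 * √7 := by
  rw [show (28 : ℝ) = 2 ^ 2 * 7 by norm_num, sqrt_mul (by positivity), sqrt_sq zero_le_two]

open Real in
/-- `w = (6cos(2π/7) + 1)/(2√7)` satisfies `4w³ - 3w = 1/√28`;
equivalently `w = cos θ` for an angle `θ` with `cos (3θ) = 1/√28`. -/
theorem heptagon_trisection (w : ℝ) (hw : w = (6 * cos (2 * π / 7) + 1) / (2 * Real.sqrt 7)) :
    4 * w ^ 3 - 3 * w = 1 / Real.sqrt 28 ∧
    ∃ θ : ℝ, w = cos θ ∧ cos (3 * θ) = 1 / Real.sqrt 28 := by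
  have hw' : w = (3 * (2 * cos (2 * π / 7)) + 1) / (2 * √7) := by rw [hw]; ring
  have hcubic : 4 * w ^ 3 - 3 * w = 1 / √28 := by
    rw [hw', sqrt_twenty_eight]
    exact chebyshev_cubic_of_heptagon_cubic two_cos_two_pi_div_seven_cubic (sq_sqrt (by norm_num))
  have hrhs : |1 / √28| ≤ 1 := by
    rw [abs_of_nonneg (by positivity), div_le_one (by positivity), one_le_sqrt]
    norm_num
  exact ⟨hcubic, exists_cos_eq_and_cos_three_mul_eq hcubic hrhs⟩
end

section
/- The identity 4·sin²(2π/7) = 3·cos²(π/7) + 4·cos⁴(3π/7) holds for the real sine and cosine functions. -/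
/-!
Put `c = cos (π / 7)`. Since `4π/7 = π - 3π/7`, we have `cos (4π/7) + cos (3π/7) = 0`, and expanding
both terms as polynomials in `c` shows that `c` is a root of `8c³ - 4c² - 4c + 1`. Both sides of the
identity are polynomials in `c` as well: the left side is `16c²(1 - c²)`, and the right side is
`3c² + (1 - c)²` because `cos² (3π/7) = (1 + cos (6π/7)) / 2 = (1 - c) / 2`. Their difference is
`(2c + 1)(8c³ - 4c² - 4c + 1)`.
-/

open Real

theorem cos_four_mul_add_cos_three_mul (x : ℝ) :
    cos (4 * x) + cos (3 * x) =
      (cos x + 1) * (8 * cos x ^ 3 - 4 * cos x ^ 2 - 4 * cos x + 1) := by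
  rw [show 4 * x = 2 * (2 * x) by ring, cos_two_mul, cos_two_mul, cos_three_mul]
  ring

theorem cos_pi_div_seven_cubic :
    8 * cos (π / 7) ^ 3 - 4 * cos (π / 7) ^ 2 - 4 * cos (π / 7) + 1 = 0 := by
  have hsum : cos (4 * (π / 7)) + cos (3 * (π / 7)) = 0 := by
    rw [show 4 * (π / 7) = π - 3 * (π / 7) by ring, cos_pi_sub, neg_add_cancel]
  have hpos : 0 < cos (π / 7) :=
    cos_pos_of_mem_Ioo ⟨by linarith [pi_pos], by linarith [pi_pos]⟩
  rw [cos_four_mul_add_cos_three_mul] at hsum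
  exact (mul_eq_zero.mp hsum).resolve_left (by positivity)

theorem cos_sq_three_pi_div_seven : cos (3 * π / 7) ^ 2 = (1 - cos (π / 7)) / 2 := by
  rw [cos_sq, show 2 * (3 * π / 7) = π - π / 7 by ring, cos_pi_sub]
  ring

open Real in
/-- `4sin²(2π/7) = 3cos²(π/7) + 4cos⁴(3π/7)`. -/
theorem sin_sq_two_pi_div_seven :
    4 * sin (2 * π / 7) ^ 2 = 3 * cos (π / 7) ^ 2 + 4 * cos (3 * π / 7) ^ 4 := by
  have hsin : sin (2 * π / 7) ^ 2 = 4 * cos (π / 7) ^ 2 * (1 - cos (π / 7) ^ 2) := by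
    rw [show 2 * π / 7 = 2 * (π / 7) by ring, sin_two_mul, mul_pow, mul_pow, sin_sq]
    ring
  rw [hsin, show cos (3 * π / 7) ^ 4 = (cos (3 * π / 7) ^ 2) ^ 2 by ring,
    cos_sq_three_pi_div_seven]
  linear_combination (-(2 * cos (π / 7) + 1)) * cos_pi_div_seven_cubic
end

section
/- Let a, b ∈ ℂ with |a| > 1, |b| > 1, and b = k·conj(a) for some real k > 0. Set q = Re(a·b), r = Re(a+b), s = Im(a+b), and τ = (s² + r² − 4q²)/4. Then every complex root of the cubic polynomial f(λ) = λ³ + τλ + q·r·s/2 is real, i.e., f has three real roots. -/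
/-!
A depressed real cubic `λ³ + pλ + c` has only real roots as soon as `4p³ + 27c² ≤ 0`.
Writing `a = x + iy`, one has `q = k(x² + y²)`, `r = (1 + k)x`, `s = (1 - k)y`, and with
`M = 4q²`, `P = r²`, `Q = s²` that condition reads `27MPQ ≤ (M - P - Q)³`, which holds
whenever `∛P + ∛Q ≤ ∛M`. For `|k| ≤ 1` the three-term AM-GM inequality, applied to
`(1 ± k)(x² + y²)/2` (twice) and `x²` resp. `y²`, produces the required cube roots up to a
common factor; that their sum is at most `∛M` is exactly `|b| ≥ 1`. Exchanging `a` and `b`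
replaces `k` by `k⁻¹` and reduces `|k| > 1` to this case.
-/

theorem im_eq_zero_of_depressed_cubic_eq_zero {p c : ℝ} (hdisc : 4 * p ^ 3 + 27 * c ^ 2 ≤ 0)
    {z : ℂ} (hz : z ^ 3 + (p : ℂ) * z + (c : ℂ) = 0) : z.im = 0 := by
  by_contra hv
  have hre : z.re ^ 3 - 3 * z.re * z.im ^ 2 + p * z.re + c = 0 := by
    have := congrArg Complex.re hz
    simp only [pow_succ, pow_zero, one_mul, Complex.add_re, Complex.mul_re, Complex.mul_im,
      Complex.ofReal_re, Complex.ofReal_im, Complex.zero_re] at this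
    linear_combination this
  have him : z.im * (3 * z.re ^ 2 - z.im ^ 2 + p) = 0 := by
    have := congrArg Complex.im hz
    simp only [pow_succ, pow_zero, one_mul, Complex.add_im, Complex.mul_re, Complex.mul_im,
      Complex.ofReal_re, Complex.ofReal_im, Complex.zero_im] at this
    linear_combination this
  have hp : p = z.im ^ 2 - 3 * z.re ^ 2 := by
    linear_combination (mul_eq_zero.mp him).resolve_left hv
  have hc : c = 2 * z.re ^ 3 + 2 * z.re * z.im ^ 2 := by linear_combination hre - z.re * hp
  have hpos : 0 < 4 * z.im ^ 2 * (z.im ^ 2 + 9 * z.re ^ 2) ^ 2 := by positivity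
  have hdisc_eq : 4 * p ^ 3 + 27 * c ^ 2 = 4 * z.im ^ 2 * (z.im ^ 2 + 9 * z.re ^ 2) ^ 2 := by
    rw [hp, hc]; ring
  linarith

theorem sq_mul_le_cube_of_nonneg {A B : ℝ} (hA : 0 ≤ A) (hB : 0 ≤ B) :
    A ^ 2 * B ≤ ((2 * A + B) / 3) ^ 3 := by
  nlinarith [mul_nonneg (sq_nonneg (A - B)) (by positivity : 0 ≤ 8 * A + B)]

theorem mul_cube_mul_cube_le {u v N : ℝ} (hu : 0 ≤ u) (hv : 0 ≤ v) (hN : (u + v) ^ 3 ≤ N) :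
    27 * N * u ^ 3 * v ^ 3 ≤ (N - u ^ 3 - v ^ 3) ^ 3 := by
  obtain ⟨d, hd, rfl⟩ : ∃ d, 0 ≤ d ∧ N = d + (u + v) ^ 3 :=
    ⟨N - (u + v) ^ 3, by linarith, by ring⟩
  have h : 0 ≤ d ^ 3 + 9 * d ^ 2 * (u * v * (u + v)) +
      27 * d * (u ^ 2 * v ^ 2 * (u ^ 2 + u * v + v ^ 2)) := by
    positivity
  linear_combination h

theorem mul_mul_le_sub_sub_cube {P Q M t u v : ℝ} (hQ₀ : 0 ≤ Q) (ht : 0 < t)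
    (hu : 0 ≤ u) (hv : 0 ≤ v) (hP : t * P ≤ u ^ 3) (hQ : t * Q ≤ v ^ 3)
    (hM : (u + v) ^ 3 ≤ t * M) :
    27 * M * P * Q ≤ (M - P - Q) ^ 3 := by
  have hM₀ : 0 ≤ t * M := (by positivity : 0 ≤ (u + v) ^ 3).trans hM
  have hsum : u ^ 3 + v ^ 3 ≤ (u + v) ^ 3 := by
    nlinarith [mul_nonneg (mul_nonneg hu hv) (add_nonneg hu hv)]
  have hPQ : t * P * (t * Q) ≤ u ^ 3 * v ^ 3 := mul_le_mul hP hQ (by positivity) (by positivity)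
  have key : 27 * (t * M) * (t * P) * (t * Q) ≤ (t * M - t * P - t * Q) ^ 3 :=
    calc 27 * (t * M) * (t * P) * (t * Q) ≤ 27 * (t * M) * u ^ 3 * v ^ 3 := by
          nlinarith [mul_le_mul_of_nonneg_left hPQ hM₀]
      _ ≤ (t * M - u ^ 3 - v ^ 3) ^ 3 := mul_cube_mul_cube_le hu hv hM
      _ ≤ (t * M - t * P - t * Q) ^ 3 := pow_le_pow_left₀ (by linarith) (by linarith) 3
  have ht3 : 0 < t ^ 3 := by positivity
  nlinarith

theorem alhazen_discriminant_of_abs_le_one {x y k : ℝ} (hk : |k| ≤ 1)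
    (hkR : 1 ≤ k ^ 2 * (x ^ 2 + y ^ 2)) :
    27 * (4 * (k * (x ^ 2 + y ^ 2)) ^ 2) * ((1 + k) * x) ^ 2 * ((1 - k) * y) ^ 2 ≤
      (4 * (k * (x ^ 2 + y ^ 2)) ^ 2 - ((1 + k) * x) ^ 2 - ((1 - k) * y) ^ 2) ^ 3 := by
  obtain ⟨hk₁, hk₂⟩ := abs_le.mp hk
  set R := x ^ 2 + y ^ 2
  have hR : 0 < R := by nlinarith
  have hA : 0 ≤ (1 + k) * R / 2 := by nlinarith
  have hB : 0 ≤ (1 - k) * R / 2 := by nlinarith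
  refine mul_mul_le_sub_sub_cube (sq_nonneg _) (by positivity : 0 < R ^ 2 / 4)
    (u := (2 * ((1 + k) * R / 2) + x ^ 2) / 3) (v := (2 * ((1 - k) * R / 2) + y ^ 2) / 3)
    (by nlinarith [sq_nonneg x]) (by nlinarith [sq_nonneg y]) ?_ ?_ ?_
  · linear_combination sq_mul_le_cube_of_nonneg hA (sq_nonneg x)
  · linear_combination sq_mul_le_cube_of_nonneg hB (sq_nonneg y)
  · have : 0 ≤ R ^ 3 * (k ^ 2 * R - 1) := mul_nonneg (by positivity) (by linarith)
    linear_combination this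

theorem alhazen_discriminant {x y k : ℝ} (hR : 1 ≤ x ^ 2 + y ^ 2)
    (hkR : 1 ≤ k ^ 2 * (x ^ 2 + y ^ 2)) :
    27 * (4 * (k * (x ^ 2 + y ^ 2)) ^ 2) * ((1 + k) * x) ^ 2 * ((1 - k) * y) ^ 2 ≤
      (4 * (k * (x ^ 2 + y ^ 2)) ^ 2 - ((1 + k) * x) ^ 2 - ((1 - k) * y) ^ 2) ^ 3 := by
  rcases le_or_gt |k| 1 with hk | hk
  · exact alhazen_discriminant_of_abs_le_one hk hkR
  -- the roles of `a = x + iy` and `b = k(x - iy)` exchanged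
  have hk₀ : k ≠ 0 := by rintro rfl; norm_num at hk
  have h := alhazen_discriminant_of_abs_le_one (x := k * x) (y := k * y) (k := k⁻¹)
    (by rw [abs_inv]; exact inv_le_one_of_one_le₀ hk.le) (by field_simp; linarith)
  have hq : k⁻¹ * ((k * x) ^ 2 + (k * y) ^ 2) = k * (x ^ 2 + y ^ 2) := by field_simp
  have hr : (1 + k⁻¹) * (k * x) = (1 + k) * x := by field_simp; ring
  have hs : ((1 - k⁻¹) * (k * y)) ^ 2 = ((1 - k) * y) ^ 2 := by field_simp; ring
  rwa [hq, hr, hs] at h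

open Complex in
theorem alhazen_pencil_cubic_totally_real_general (a b : ℂ) (ha : 1 < ‖a‖)
    (hb : 1 < ‖b‖) (k : ℝ) (hba : b = (k : ℂ) * starRingEnd ℂ a)
    (q r s τ : ℝ) (hq : q = (a * b).re) (hr : r = (a + b).re) (hs : s = (a + b).im)
    (hτ : τ = (s ^ 2 + r ^ 2 - 4 * q ^ 2) / 4) :
    ∀ z : ℂ, z ^ 3 + (τ : ℂ) * z + ((q * r * s / 2 : ℝ) : ℂ) = 0 → z.im = 0 := by
  intro z hz
  refine im_eq_zero_of_depressed_cubic_eq_zero ?_ hz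
  have hnorm : ‖a‖ ^ 2 = a.re ^ 2 + a.im ^ 2 := by
    rw [Complex.sq_norm, Complex.normSq_apply]; ring
  have hR : 1 ≤ a.re ^ 2 + a.im ^ 2 := by nlinarith
  have hkR : 1 ≤ k ^ 2 * (a.re ^ 2 + a.im ^ 2) := by
    have : ‖b‖ = |k| * ‖a‖ := by simp [hba]
    nlinarith [sq_abs k, abs_nonneg k]
  have hbre : b.re = k * a.re := by simp [hba]
  have hbim : b.im = -(k * a.im) := by simp [hba]
  have hq' : q = k * (a.re ^ 2 + a.im ^ 2) := by rw [hq, Complex.mul_re, hbre, hbim]; ring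
  have hr' : r = (1 + k) * a.re := by rw [hr, Complex.add_re, hbre]; ring
  have hs' : s = (1 - k) * a.im := by rw [hs, Complex.add_im, hbim]; ring
  rw [hτ, hq', hr', hs']
  linear_combination alhazen_discriminant hR hkR / 16

open Complex in
/-- For `a b : ℂ` exterior to the unit circle with `b = k·conj a`, `k > 0`,
every complex root of `λ³ + τλ + qrs/2` (with `q = Re(ab)`, `r = Re(a+b)`, `s = Im(a+b)`,
`τ = (s² + r² - 4q²)/4`) is real. -/
theorem alhazen_pencil_cubic_totally_real (a b : ℂ) (ha : 1 < ‖a‖)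
    (hb : 1 < ‖b‖) (k : ℝ) (hk : 0 < k) (hba : b = (k : ℂ) * starRingEnd ℂ a)
    (q r s τ : ℝ) (hq : q = (a * b).re) (hr : r = (a + b).re) (hs : s = (a + b).im)
    (hτ : τ = (s ^ 2 + r ^ 2 - 4 * q ^ 2) / 4) :
    ∀ z : ℂ, z ^ 3 + (τ : ℂ) * z + ((q * r * s / 2 : ℝ) : ℂ) = 0 → z.im = 0 :=
  alhazen_pencil_cubic_totally_real_general a b ha hb k hba q r s τ hq hr hs hτ
end
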